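/- Let f be a Rademacher random multiplicative function. For any real t₁, any 400 ≤ x ≤ y, and any σ ≥ −1/log y: (i) E ∏_{x < p ≤ y} |1 + f(p)/p^{1/2+σ+it₁}|² = exp{ ∑_{x < p ≤ y} 1/p^{1+2σ} + O(1/(√x log x)) }; and (ii) E ∏_{x < p ≤ y} |1 + f(p)/p^{1/2+σ+it₁}|^{−2} = exp{ ∑_{x < p ≤ y} (1 + 2cos(2t₁ log p))/p^{1+2σ} + O(1/(√x log x)) }. -/

import Mathlib

/-!
By independence the expectation factors over the primes, and each factor is an explicit average
over `f(p) = ±1`. With `Q = p^{-(1+2σ)}` and `c = cos(t₁ log p)` one has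
`|1 ± p^{-s}|² = 1 ± 2√Q c + Q`, so the two averages are `1 + Q` and
`(1 + Q) / ((1 + Q)² - 4Qc²) = exp((4c² - 1) Q + O(Q²))`, where `4c² - 1 = 1 + 2cos(2t₁ log p)`.
Since `σ ≥ -1/log y` and `p ≤ y`, `Q ≤ e²/p`, so the `O(Q²)` errors add up to
`O(∑_{p > x} p⁻²) = O(1/x)`, which is `O(1/(√x log x))`.
-/

open MeasureTheory ProbabilityTheory Complex

lemma Real.abs_log_one_add_sub_self_le {u : ℝ} (hu : |u| ≤ 1 / 2) :
    |Real.log (1 + u) - u| ≤ 2 * u ^ 2 := by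
  have h := Real.abs_log_sub_add_sum_range_le (x := -u) (by rw [abs_neg]; linarith) 1
  simp only [Finset.range_one, Finset.sum_singleton, zero_add, pow_one, Nat.cast_zero,
    div_one, sub_neg_eq_add, abs_neg] at h
  have hu1 : 0 < 1 - |u| := by linarith
  calc |Real.log (1 + u) - u| = |-u + Real.log (1 + u)| := by ring_nf
    _ ≤ |u| ^ 2 / (1 - |u|) := h
    _ ≤ 2 * u ^ 2 := by rw [div_le_iff₀ hu1, sq_abs]; nlinarith [sq_nonneg u]

lemma abs_log_one_add_div_sq_sub_le {Q c : ℝ} (hQ₀ : 0 ≤ Q) (hQ : Q ≤ 1 / 14) (hc : c ^ 2 ≤ 1) :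
    |Real.log ((1 + Q) / ((1 + Q) ^ 2 - 4 * Q * c ^ 2)) - (4 * c ^ 2 - 1) * Q|
      ≤ 101 * Q ^ 2 := by
  set u := 2 * Q + Q ^ 2 - 4 * Q * c ^ 2
  have hu : |u| ≤ 7 * Q := by rw [abs_le]; constructor <;> nlinarith
  have hu_sq : u ^ 2 ≤ 49 * Q ^ 2 := by rw [← sq_abs]; nlinarith [abs_nonneg u]
  have hlogQ := Real.abs_log_one_add_sub_self_le (u := Q) (by rw [abs_of_nonneg hQ₀]; linarith)
  have hlogu := Real.abs_log_one_add_sub_self_le (u := u) (by linarith)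
  rw [show (1 + Q) ^ 2 - 4 * Q * c ^ 2 = 1 + u by ring,
    Real.log_div (by linarith) (by linarith [(abs_le.1 hu).1]),
    show Real.log (1 + Q) - Real.log (1 + u) - (4 * c ^ 2 - 1) * Q
      = (Real.log (1 + Q) - Q) - (Real.log (1 + u) - u) - Q ^ 2 by ring]
  have h₁ := abs_sub ((Real.log (1 + Q) - Q) - (Real.log (1 + u) - u)) (Q ^ 2)
  have h₂ := abs_sub (Real.log (1 + Q) - Q) (Real.log (1 + u) - u)
  rw [abs_of_nonneg (sq_nonneg Q)] at h₁
  linarith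

lemma Complex.sq_norm_one_add_ofReal_mul (v : ℝ) (z : ℂ) :
    ‖1 + v * z‖ ^ 2 = 1 + 2 * v * z.re + v ^ 2 * ‖z‖ ^ 2 := by
  rw [Complex.sq_norm, Complex.sq_norm, Complex.normSq_apply, Complex.normSq_apply]
  simp only [add_re, add_im, one_re, one_im, mul_re, mul_im, ofReal_re, ofReal_im]
  ring

lemma Complex.inv_ofReal_cpow_eq_rpow_mul_exp {p : ℝ} (hp : 0 < p) (a t : ℝ) :
    ((p : ℂ) ^ ((a : ℂ) + t * I))⁻¹
      = (p ^ (-a) : ℝ) * Complex.exp (↑(-(t * Real.log p)) * I) := by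
  rw [← Complex.cpow_neg, Complex.cpow_def_of_ne_zero (by exact_mod_cast hp.ne'),
    ← Complex.ofReal_log hp.le, Real.rpow_def_of_pos hp, Complex.ofReal_exp, ← Complex.exp_add]
  congr 1
  push_cast
  ring

lemma sq_norm_one_add_div_ofReal_cpow {p : ℝ} (hp : 0 < p) (v a t : ℝ) :
    ‖1 + (v : ℂ) / (p : ℂ) ^ ((a : ℂ) + t * I)‖ ^ 2
      = 1 + 2 * v * (p ^ (-a) * Real.cos (t * Real.log p)) + v ^ 2 * (p ^ (-a)) ^ 2 := by
  rw [div_eq_mul_inv, Complex.sq_norm_one_add_ofReal_mul,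
    Complex.inv_ofReal_cpow_eq_rpow_mul_exp hp, Complex.re_ofReal_mul,
    Complex.exp_ofReal_mul_I_re, norm_mul, Complex.norm_exp_ofReal_mul_I, Complex.norm_real,
    Real.norm_of_nonneg (Real.rpow_nonneg hp.le _), Real.cos_neg, mul_one]

lemma Real.rpow_neg_half_add_sq {p : ℝ} (hp : 0 < p) (σ : ℝ) :
    (p ^ (-(1 / 2 + σ))) ^ 2 = 1 / p ^ (1 + 2 * σ) := by
  rw [← Real.rpow_natCast, ← Real.rpow_mul hp.le,
    show -(1 / 2 + σ) * ((2 : ℕ) : ℝ) = -(1 + 2 * σ) by push_cast; ring,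
    Real.rpow_neg hp.le, one_div]

lemma rademacher_mean_sq_norm {p : ℝ} (hp : 0 < p) (σ t : ℝ) :
    (‖1 + ((1 : ℝ) : ℂ) / (p : ℂ) ^ (((1 / 2 + σ : ℝ) : ℂ) + t * I)‖ ^ (2 : ℝ)
      + ‖1 + ((-1 : ℝ) : ℂ) / (p : ℂ) ^ (((1 / 2 + σ : ℝ) : ℂ) + t * I)‖ ^ (2 : ℝ)) / 2
      = 1 + 1 / p ^ (1 + 2 * σ) := by
  rw [Real.rpow_two, Real.rpow_two, sq_norm_one_add_div_ofReal_cpow hp,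
    sq_norm_one_add_div_ofReal_cpow hp, ← Real.rpow_neg_half_add_sq hp]
  ring

lemma rademacher_mean_inv_sq_norm {p : ℝ} (hp : 1 < p) {σ : ℝ} (hσ : 0 < 1 + 2 * σ) (t : ℝ) :
    (‖1 + ((1 : ℝ) : ℂ) / (p : ℂ) ^ (((1 / 2 + σ : ℝ) : ℂ) + t * I)‖ ^ (-2 : ℝ)
      + ‖1 + ((-1 : ℝ) : ℂ) / (p : ℂ) ^ (((1 / 2 + σ : ℝ) : ℂ) + t * I)‖ ^ (-2 : ℝ)) / 2
      = (1 + 1 / p ^ (1 + 2 * σ)) / ((1 + 1 / p ^ (1 + 2 * σ)) ^ 2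
          - 4 * (1 / p ^ (1 + 2 * σ)) * Real.cos (t * Real.log p) ^ 2) := by
  have hp₀ : 0 < p := by linarith
  rw [Real.rpow_neg (norm_nonneg _), Real.rpow_neg (norm_nonneg _), Real.rpow_two, Real.rpow_two,
    sq_norm_one_add_div_ofReal_cpow hp₀, sq_norm_one_add_div_ofReal_cpow hp₀,
    ← Real.rpow_neg_half_add_sq hp₀]
  set r := p ^ (-(1 / 2 + σ))
  set c := Real.cos (t * Real.log p)
  have hr₀ : 0 < r := Real.rpow_pos_of_pos hp₀ _
  have hr₁ : r < 1 := Real.rpow_lt_one_of_one_lt_of_neg hp (by linarith)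
  have hc := abs_le.1 (Real.abs_cos_le_one (t * Real.log p))
  have hplus : 0 < 1 + 2 * 1 * (r * c) + 1 ^ 2 * r ^ 2 := by
    nlinarith [mul_pos (sub_pos.2 hr₁) (sub_pos.2 hr₁)]
  have hminus : 0 < 1 + 2 * (-1) * (r * c) + (-1) ^ 2 * r ^ 2 := by
    nlinarith [mul_pos (sub_pos.2 hr₁) (sub_pos.2 hr₁)]
  rw [show (1 + r ^ 2) ^ 2 - 4 * r ^ 2 * c ^ 2
      = (1 + 2 * 1 * (r * c) + 1 ^ 2 * r ^ 2) * (1 + 2 * (-1) * (r * c) + (-1) ^ 2 * r ^ 2) by ring,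
    inv_add_inv hplus.ne' hminus.ne', div_div,
    div_eq_div_iff (by positivity) (mul_pos hplus hminus).ne']
  ring

lemma exists_eq_exp_add_of_abs_log_sub_le {a m B : ℝ} (ha : 0 < a) (h : |Real.log a - m| ≤ B) :
    ∃ e, |e| ≤ B ∧ a = Real.exp (m + e) :=
  ⟨Real.log a - m, h, by rw [add_sub_cancel, Real.exp_log ha]⟩

lemma exists_rademacher_mean_sq_norm_eq_exp {p : ℝ} (hp : 0 < p) {σ : ℝ}
    (hQ : 1 / p ^ (1 + 2 * σ) ≤ 1 / 2) (t : ℝ) :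
    ∃ e, |e| ≤ 2 * (1 / p ^ (1 + 2 * σ)) ^ 2 ∧
      (‖1 + ((1 : ℝ) : ℂ) / (p : ℂ) ^ (((1 / 2 + σ : ℝ) : ℂ) + t * I)‖ ^ (2 : ℝ)
        + ‖1 + ((-1 : ℝ) : ℂ) / (p : ℂ) ^ (((1 / 2 + σ : ℝ) : ℂ) + t * I)‖ ^ (2 : ℝ)) / 2
        = Real.exp (1 / p ^ (1 + 2 * σ) + e) := by
  have hQ₀ : 0 ≤ 1 / p ^ (1 + 2 * σ) := by positivity
  rw [rademacher_mean_sq_norm hp]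
  exact exists_eq_exp_add_of_abs_log_sub_le (by positivity)
    (Real.abs_log_one_add_sub_self_le (by rwa [abs_of_nonneg hQ₀]))

lemma exists_rademacher_mean_inv_sq_norm_eq_exp {p : ℝ} (hp : 1 < p) {σ : ℝ}
    (hσ : 0 < 1 + 2 * σ) (hQ : 1 / p ^ (1 + 2 * σ) ≤ 1 / 14) (t : ℝ) :
    ∃ e, |e| ≤ 101 * (1 / p ^ (1 + 2 * σ)) ^ 2 ∧
      (‖1 + ((1 : ℝ) : ℂ) / (p : ℂ) ^ (((1 / 2 + σ : ℝ) : ℂ) + t * I)‖ ^ (-2 : ℝ)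
        + ‖1 + ((-1 : ℝ) : ℂ) / (p : ℂ) ^ (((1 / 2 + σ : ℝ) : ℂ) + t * I)‖ ^ (-2 : ℝ)) / 2
        = Real.exp ((1 + 2 * Real.cos (2 * t * Real.log p)) / p ^ (1 + 2 * σ) + e) := by
  set Q := 1 / p ^ (1 + 2 * σ) with hQ_def
  set c := Real.cos (t * Real.log p)
  have hQ₀ : 0 ≤ Q := by positivity
  have hc : c ^ 2 ≤ 1 := by
    rw [← sq_abs]; exact pow_le_one₀ (abs_nonneg _) (Real.abs_cos_le_one _)
  have hmain : (1 + 2 * Real.cos (2 * t * Real.log p)) / p ^ (1 + 2 * σ) = (4 * c ^ 2 - 1) * Q := by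
    rw [mul_assoc, Real.cos_two_mul, hQ_def]; ring
  rw [rademacher_mean_inv_sq_norm hp hσ, hmain]
  exact exists_eq_exp_add_of_abs_log_sub_le
    (div_pos (by linarith) (by nlinarith)) (abs_log_one_add_div_sq_sub_le hQ₀ hQ hc)

namespace ProbabilityTheory

variable {Ω : Type*} [MeasurableSpace Ω] {μ : Measure Ω}

lemma aestronglyMeasurable_rademacher (g : ℝ → ℝ) :
    AEStronglyMeasurable g ((2⁻¹ : ENNReal) • Measure.dirac (1 : ℝ)
      + (2⁻¹ : ENNReal) • Measure.dirac (-1 : ℝ)) :=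
  (aestronglyMeasurable_dirac.smul_measure _).add_measure
    (aestronglyMeasurable_dirac.smul_measure _)

lemma integral_comp_of_map_eq_rademacher {X : Ω → ℝ} (hX : AEMeasurable X μ)
    (hmap : μ.map X = (2⁻¹ : ENNReal) • Measure.dirac (1 : ℝ)
      + (2⁻¹ : ENNReal) • Measure.dirac (-1 : ℝ)) (g : ℝ → ℝ) :
    ∫ ω, g (X ω) ∂μ = (g 1 + g (-1)) / 2 := by
  have hint : ∀ a : ℝ, Integrable g ((2⁻¹ : ENNReal) • Measure.dirac a) := fun a =>
    (integrable_dirac enorm_lt_top).smul_measure (by simp)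
  rw [← integral_map hX (hmap ▸ aestronglyMeasurable_rademacher g), hmap,
    integral_add_measure (hint 1) (hint (-1)), integral_smul_measure, integral_smul_measure,
    integral_dirac, integral_dirac]
  norm_num
  ring

lemma iIndepFun.integral_finset_prod_comp_rademacher {ι : Type*} {X : ι → Ω → ℝ}
    (hindep : iIndepFun X μ) (hX : ∀ i, AEMeasurable (X i) μ)
    (hmap : ∀ i, μ.map (X i) = (2⁻¹ : ENNReal) • Measure.dirac (1 : ℝ)
      + (2⁻¹ : ENNReal) • Measure.dirac (-1 : ℝ)) (g : ι → ℝ → ℝ) (s : Finset ι) :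
    ∫ ω, ∏ i ∈ s, g i (X i ω) ∂μ = ∏ i ∈ s, (g i 1 + g i (-1)) / 2 := by
  have h := (hindep.precomp Subtype.val_injective).integral_fun_prod_comp (ι := s)
    (fun i => hX i) (f := fun i => g i) (fun i => hmap i ▸ aestronglyMeasurable_rademacher _)
  rw [Finset.prod_coe_sort s (fun i => ∫ ω, g i (X i ω) ∂μ)] at h
  simp only [fun ω => Finset.prod_coe_sort s (fun i => g i (X i ω))] at h
  rw [h]
  exact Finset.prod_congr rfl fun i _ => integral_comp_of_map_eq_rademacher (hX i) (hmap i) (g i)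

lemma iIndepFun.integral_finset_prod_comp_primes {f : ℕ → Ω → ℝ}
    (hindep : iIndepFun (fun p : {p : ℕ // p.Prime} => f p.1) μ) (hf : ∀ p, Measurable (f p))
    (hmap : ∀ p : ℕ, p.Prime → μ.map (f p) = (2⁻¹ : ENNReal) • Measure.dirac (1 : ℝ)
      + (2⁻¹ : ENNReal) • Measure.dirac (-1 : ℝ)) (g : ℕ → ℝ → ℝ) {S : Finset ℕ}
    (hS : ∀ p ∈ S, p.Prime) :
    ∫ ω, ∏ p ∈ S, g p (f p ω) ∂μ = ∏ p ∈ S, (g p 1 + g p (-1)) / 2 := by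
  have h := hindep.integral_finset_prod_comp_rademacher (fun p => (hf p).aemeasurable)
    (fun p => hmap p p.2) (fun p => g p) (S.subtype Nat.Prime)
  simpa only [fun ω => Finset.prod_subtype_of_mem (fun p => g p (f p ω)) hS,
    Finset.prod_subtype_of_mem (fun p => (g p 1 + g p (-1)) / 2) hS] using h

end ProbabilityTheory

lemma exists_prod_eq_exp_sum_add {ι : Type*} {s : Finset ι} {a m B : ι → ℝ} {K : ℝ}
    (h : ∀ i ∈ s, ∃ e, |e| ≤ B i ∧ a i = Real.exp (m i + e)) (hK : ∑ i ∈ s, B i ≤ K) :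
    ∃ E, |E| ≤ K ∧ ∏ i ∈ s, a i = Real.exp (∑ i ∈ s, m i + E) := by
  choose! e he using h
  refine ⟨∑ i ∈ s, e i, (Finset.abs_sum_le_sum_abs _ _).trans
    ((Finset.sum_le_sum fun i hi => (he i hi).1).trans hK), ?_⟩
  rw [← Finset.sum_add_distrib, Real.exp_sum]
  exact Finset.prod_congr rfl fun i hi => (he i hi).2

lemma Real.exp_two_lt_eight : Real.exp 2 < 8 := by
  have h := Real.exp_one_lt_d9
  rw [show (2 : ℝ) = 1 + 1 by norm_num, Real.exp_add]
  nlinarith [Real.exp_pos 1]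

lemma neg_half_lt_neg_one_div_log {y : ℝ} (hy : 8 ≤ y) : -(1 / 2) < -1 / Real.log y := by
  have hlog : 2 < Real.log y := by
    rw [Real.lt_log_iff_exp_lt (by linarith)]; linarith [Real.exp_two_lt_eight]
  rw [neg_div, neg_lt_neg_iff, div_lt_div_iff₀ (by linarith) (by norm_num)]
  linarith

lemma one_div_rpow_one_add_two_mul_le {p y σ : ℝ} (hp : 1 ≤ p) (hpy : p ≤ y) (hy : 1 < y)
    (hσ : -1 / Real.log y ≤ σ) : 1 / p ^ (1 + 2 * σ) ≤ 8 / p := by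
  have hp₀ : 0 < p := by linarith
  have hlogy : 0 < Real.log y := Real.log_pos hy
  have hexp : -(2 * σ * Real.log p) ≤ 2 := by
    have h₁ : -σ ≤ 1 / Real.log y := by rw [neg_div] at hσ; linarith
    have h₂ : Real.log p / Real.log y ≤ 1 := (div_le_one hlogy).2 (Real.log_le_log hp₀ hpy)
    calc -(2 * σ * Real.log p) = 2 * (-σ * Real.log p) := by ring
      _ ≤ 2 * (1 / Real.log y * Real.log p) := by gcongr; exact Real.log_nonneg hp
      _ ≤ 2 := by rw [one_div_mul_eq_div]; linarith
  have hpow : p ^ (1 + 2 * σ) = p * Real.exp (2 * σ * Real.log p) := by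
    rw [Real.rpow_add hp₀, Real.rpow_one, Real.rpow_def_of_pos hp₀, mul_comm (Real.log p)]
  have hone : 1 < 8 * Real.exp (2 * σ * Real.log p) :=
    calc 1 ≤ Real.exp 2 * Real.exp (2 * σ * Real.log p) := by
          rw [← Real.exp_add, Real.one_le_exp_iff]; linarith
      _ < 8 * Real.exp (2 * σ * Real.log p) :=
          mul_lt_mul_of_pos_right Real.exp_two_lt_eight (Real.exp_pos _)
  rw [hpow, div_le_div_iff₀ (by positivity) hp₀]
  nlinarith

lemma sum_one_div_sq_le_of_lt {x : ℝ} (hx : 0 < x) {S : Finset ℕ} (hS : ∀ n ∈ S, x < n) :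
    ∑ n ∈ S, 1 / (n : ℝ) ^ 2 ≤ 2 / x := by
  have hsub : S ⊆ Finset.Ioo ⌊x⌋₊ (S.sup id + 1) := fun n hn =>
    Finset.mem_Ioo.2 ⟨(Nat.floor_lt hx.le).2 (hS n hn),
      Nat.lt_succ_of_le (Finset.le_sup (f := id) hn)⟩
  calc ∑ n ∈ S, 1 / (n : ℝ) ^ 2 ≤ ∑ n ∈ Finset.Ioo ⌊x⌋₊ (S.sup id + 1), ((n : ℝ) ^ 2)⁻¹ := by
        simp only [one_div]
        exact Finset.sum_le_sum_of_subset_of_nonneg hsub fun _ _ _ => by positivity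
    _ ≤ 2 / (⌊x⌋₊ + 1) := sum_Ioo_inv_sq_le _ _
    _ ≤ 2 / x := div_le_div_of_nonneg_left zero_le_two hx (Nat.lt_floor_add_one x).le

lemma Real.sqrt_mul_log_le {x : ℝ} (hx : 0 ≤ x) : √x * Real.log x ≤ 2 * x := by
  have h := Real.log_le_rpow_div hx (ε := 1 / 2) (by norm_num)
  rw [← Real.sqrt_eq_rpow, div_eq_mul_inv, show ((1 : ℝ) / 2)⁻¹ = 2 by norm_num] at h
  calc √x * Real.log x ≤ √x * (√x * 2) := by gcongr
    _ = 2 * x := by rw [← mul_assoc, Real.mul_self_sqrt hx, mul_comm]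

lemma sum_sq_one_div_rpow_le {x y σ : ℝ} (hx : 1 < x) (hσ : -1 / Real.log y ≤ σ)
    {S : Finset ℕ} (hS : ∀ p ∈ S, x < p ∧ (p : ℝ) ≤ y) :
    ∑ p ∈ S, (1 / (p : ℝ) ^ (1 + 2 * σ)) ^ 2 ≤ 256 / (√x * Real.log x) := by
  have hD : 0 < √x * Real.log x :=
    mul_pos (Real.sqrt_pos.2 (by linarith)) (Real.log_pos hx)
  calc ∑ p ∈ S, (1 / (p : ℝ) ^ (1 + 2 * σ)) ^ 2 ≤ ∑ p ∈ S, 64 * (1 / (p : ℝ) ^ 2) := by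
        gcongr with p hp
        obtain ⟨hxp, hpy⟩ := hS p hp
        calc (1 / (p : ℝ) ^ (1 + 2 * σ)) ^ 2 ≤ (8 / p) ^ 2 := pow_le_pow_left₀ (by positivity)
              (one_div_rpow_one_add_two_mul_le (by linarith) hpy (by linarith) hσ) 2
          _ = 64 * (1 / (p : ℝ) ^ 2) := by ring
    _ ≤ 64 * (2 / x) := by
        rw [← Finset.mul_sum]
        gcongr
        exact sum_one_div_sq_le_of_lt (by linarith) fun p hp => (hS p hp).1
    _ ≤ 256 / (√x * Real.log x) := by
        rw [show (64 : ℝ) * (2 / x) = 128 / x by ring, div_le_div_iff₀ (by linarith) hD]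
        nlinarith [Real.sqrt_mul_log_le (x := x) (by linarith)]

/-- **Second moments of a Rademacher Euler product.** Let `f` be a Rademacher
random multiplicative function. For any real `t₁`, any `400 ≤ x ≤ y` and any
`σ ≥ −1/log y`:
(i) `E ∏_{x < p ≤ y} |1 + f(p)/p^{1/2+σ+it₁}|²
   = exp{∑_{x < p ≤ y} 1/p^{1+2σ} + O(1/(√x log x))}`, and
(ii) `E ∏_{x < p ≤ y} |1 + f(p)/p^{1/2+σ+it₁}|^{−2}
   = exp{∑_{x < p ≤ y} (1 + 2cos(2t₁ log p))/p^{1+2σ} + O(1/(√x log x))}`. -/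
theorem rademacher_euler_product_second_moment :
    ∃ C : ℝ, 0 < C ∧
      ∀ (Ω : Type) (_ : MeasurableSpace Ω) (μ : Measure Ω), IsProbabilityMeasure μ →
      ∀ f : ℕ → Ω → ℝ,
      (∀ p, Measurable (f p)) →
      iIndepFun (fun p : {p : ℕ // p.Prime} => f p.1) μ →
      (∀ p : ℕ, p.Prime →
        μ.map (f p) = (2⁻¹ : ENNReal) • Measure.dirac (1 : ℝ)
          + (2⁻¹ : ENNReal) • Measure.dirac (-1 : ℝ)) →
      ∀ t₁ x y σ : ℝ, 400 ≤ x → x ≤ y → -1 / Real.log y ≤ σ →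
      (∃ E : ℝ, |E| ≤ C / (Real.sqrt x * Real.log x) ∧
        ∫ ω, ∏ p ∈ (Finset.Icc 1 ⌊y⌋₊).filter
              (fun p : ℕ => p.Prime ∧ x < (p : ℝ)),
            ‖1 + (f p ω : ℂ) /
                (p : ℂ) ^ (((1 / 2 + σ : ℝ) : ℂ) + (t₁ : ℂ) * Complex.I)‖ ^ (2 : ℝ) ∂μ
          = Real.exp
              ((∑ p ∈ (Finset.Icc 1 ⌊y⌋₊).filter
                  (fun p : ℕ => p.Prime ∧ x < (p : ℝ)),
                1 / ((p : ℝ) ^ (1 + 2 * σ))) + E)) ∧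
      (∃ E : ℝ, |E| ≤ C / (Real.sqrt x * Real.log x) ∧
        ∫ ω, ∏ p ∈ (Finset.Icc 1 ⌊y⌋₊).filter
              (fun p : ℕ => p.Prime ∧ x < (p : ℝ)),
            ‖1 + (f p ω : ℂ) /
                (p : ℂ) ^ (((1 / 2 + σ : ℝ) : ℂ) + (t₁ : ℂ) * Complex.I)‖ ^ (-2 : ℝ) ∂μ
          = Real.exp
              ((∑ p ∈ (Finset.Icc 1 ⌊y⌋₊).filter
                  (fun p : ℕ => p.Prime ∧ x < (p : ℝ)),
                (1 + 2 * Real.cos (2 * t₁ * Real.log p)) / ((p : ℝ) ^ (1 + 2 * σ))) + E)) := by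
  refine ⟨101 * 256, by norm_num, ?_⟩
  intro Ω _ μ _ f hf hindep hmap t₁ x y σ hx hxy hσ
  set S := (Finset.Icc 1 ⌊y⌋₊).filter (fun p : ℕ => p.Prime ∧ x < (p : ℝ))
  have hS : ∀ p ∈ S, p.Prime ∧ x < p ∧ (p : ℝ) ≤ y := fun p hp => by
    obtain ⟨hp, hprime, hxp⟩ := Finset.mem_filter.1 hp
    exact ⟨hprime, hxp, (Nat.le_floor_iff (by linarith)).1 (Finset.mem_Icc.1 hp).2⟩
  have hσ' : 0 < 1 + 2 * σ := by linarith [neg_half_lt_neg_one_div_log (y := y) (by linarith)]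
  have hQ : ∀ p ∈ S, 1 / (p : ℝ) ^ (1 + 2 * σ) ≤ 1 / 14 := fun p hp => by
    obtain ⟨-, hxp, hpy⟩ := hS p hp
    calc 1 / (p : ℝ) ^ (1 + 2 * σ) ≤ 8 / p :=
          one_div_rpow_one_add_two_mul_le (by linarith) hpy (by linarith) hσ
      _ ≤ 1 / 14 := by rw [div_le_div_iff₀ (by linarith) (by norm_num)]; linarith
  have hsum := sum_sq_one_div_rpow_le (by linarith) hσ fun p hp => (hS p hp).2
  refine ⟨?_, ?_⟩
  · rw [hindep.integral_finset_prod_comp_primes hf hmap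
      (fun p v => ‖1 + (v : ℂ) / (p : ℂ) ^ (((1 / 2 + σ : ℝ) : ℂ) + t₁ * I)‖ ^ (2 : ℝ))
      fun p hp => (hS p hp).1]
    refine exists_prod_eq_exp_sum_add (s := S)
      (B := fun p => 2 * (1 / (p : ℝ) ^ (1 + 2 * σ)) ^ 2) (fun p hp => ?_) ?_
    · simpa only [Complex.ofReal_natCast] using exists_rademacher_mean_sq_norm_eq_exp
        (p := (p : ℝ)) (by exact_mod_cast (hS p hp).1.pos) (by linarith [hQ p hp]) t₁
    · rw [← Finset.mul_sum, mul_div_assoc]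
      exact mul_le_mul (by norm_num) hsum (by positivity) (by norm_num)
  · rw [hindep.integral_finset_prod_comp_primes hf hmap
      (fun p v => ‖1 + (v : ℂ) / (p : ℂ) ^ (((1 / 2 + σ : ℝ) : ℂ) + t₁ * I)‖ ^ (-2 : ℝ))
      fun p hp => (hS p hp).1]
    refine exists_prod_eq_exp_sum_add (s := S)
      (B := fun p => 101 * (1 / (p : ℝ) ^ (1 + 2 * σ)) ^ 2) (fun p hp => ?_) ?_
    · simpa only [Complex.ofReal_natCast] using exists_rademacher_mean_inv_sq_norm_eq_exp
        (p := (p : ℝ)) (by exact_mod_cast (hS p hp).1.one_lt) hσ' (hQ p hp) t₁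
    · rw [← Finset.mul_sum, mul_div_assoc]
      exact mul_le_mul_of_nonneg_left hsum (by norm_num)
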